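/- arXiv:math/0411151 — 3 statements merged into one kernel-verified Lean document; each statement's English description precedes it below -/
import Mathlib

section
/- Let f be holomorphic on an open set U ⊆ ℂ with f'(z) ≠ 0 on U, and define u = log(2|f'|²/(1+|f|²)²). Then u is smooth on U and satisfies the Liouville equation −Δu = 4 e^{u}. -/
open Complex Set

private lemma hasDerivAt_line {h : ℂ → ℂ} {U : Set ℂ} (hU : IsOpen U)
    (hh : DifferentiableOn ℂ h U) (z v : ℂ) {t : ℝ} (ht : z + ↑t * v ∈ U) :
    HasDerivAt (fun s : ℝ => h (z + ↑s * v)) (deriv h (z + ↑t * v) * v) t := by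
  have h1 : HasDerivAt (fun s : ℂ => z + s * v) v ((t : ℂ)) := by
    simpa using ((hasDerivAt_id ((t : ℂ))).mul_const v).const_add z
  have h2 : HasDerivAt h (deriv h (z + ↑t * v)) (z + ↑t * v) :=
    (hh.differentiableAt (hU.mem_nhds ht)).hasDerivAt
  exact (h2.comp ((t : ℂ)) h1).comp_ofReal

private lemma hasDerivAt_re' {g : ℝ → ℂ} {g' : ℂ} {t : ℝ} (hg : HasDerivAt g g' t) :
    HasDerivAt (fun s => (g s).re) g'.re t := by
  have := (Complex.reCLM.hasFDerivAt.comp_hasDerivAt t hg)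
  exact this

private lemma hasDerivAt_im' {g : ℝ → ℂ} {g' : ℂ} {t : ℝ} (hg : HasDerivAt g g' t) :
    HasDerivAt (fun s => (g s).im) g'.im t := by
  have := (Complex.imCLM.hasFDerivAt.comp_hasDerivAt t hg)
  exact this

private lemma hasDerivAt_normSq_comp {g : ℝ → ℂ} {g' : ℂ} {t : ℝ} (hg : HasDerivAt g g' t) :
    HasDerivAt (fun s => Complex.normSq (g s))
      (2 * ((g t).re * g'.re + (g t).im * g'.im)) t := by
  have H := ((hasDerivAt_re' hg).mul (hasDerivAt_re' hg)).add
    ((hasDerivAt_im' hg).mul (hasDerivAt_im' hg))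
  exact H.congr_deriv (by ring)

noncomputable def Nof (h : ℂ → ℂ) (z v : ℂ) (t : ℝ) : ℝ :=
  2 * ((h (z + ↑t * v)).re * (deriv h (z + ↑t * v) * v).re
      + (h (z + ↑t * v)).im * (deriv h (z + ↑t * v) * v).im)

noncomputable def Aof (h : ℂ → ℂ) (c : ℝ) (z v : ℂ) (t : ℝ) : ℝ :=
  c + Complex.normSq (h (z + ↑t * v))

noncomputable def Dof (h : ℂ → ℂ) (c : ℝ) (z v : ℂ) (t : ℝ) : ℝ :=
  Nof h z v t / Aof h c z v t

noncomputable def Eof (h : ℂ → ℂ) (c : ℝ) (z v : ℂ) (t : ℝ) : ℝ :=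
  (2 * ((deriv h (z + ↑t * v) * v).re ^ 2 + (deriv h (z + ↑t * v) * v).im ^ 2
      + (h (z + ↑t * v)).re * (deriv (deriv h) (z + ↑t * v) * v * v).re
      + (h (z + ↑t * v)).im * (deriv (deriv h) (z + ↑t * v) * v * v).im) * Aof h c z v t
    - Nof h z v t * Nof h z v t) / (Aof h c z v t) ^ 2

private lemma second_deriv_along {h : ℂ → ℂ} {U : Set ℂ} (hU : IsOpen U)
    (hh : DifferentiableOn ℂ h U) (hh2 : DifferentiableOn ℂ (deriv h) U)
    {c : ℝ} (hc : ∀ w ∈ U, 0 < c + Complex.normSq (h w)) (z v : ℂ) :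
    (∀ t : ℝ, z + ↑t * v ∈ U →
      HasDerivAt (fun s : ℝ => Real.log (c + Complex.normSq (h (z + ↑s * v))))
        (Dof h c z v t) t) ∧
    (∀ t : ℝ, z + ↑t * v ∈ U → HasDerivAt (Dof h c z v) (Eof h c z v t) t) := by
  have hA : ∀ t : ℝ, z + ↑t * v ∈ U →
      HasDerivAt (Aof h c z v) (Nof h z v t) t := by
    intro t ht
    have := (hasDerivAt_normSq_comp (hasDerivAt_line hU hh z v ht)).const_add c
    exact this
  constructor
  · intro t ht
    have := (hA t ht).log (ne_of_gt (hc _ ht))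
    simpa [Dof, Aof] using this
  · intro t ht
    have hg := hasDerivAt_line hU hh z v ht
    have hGv := (hasDerivAt_line hU hh2 z v ht).mul_const v
    have hN : HasDerivAt (Nof h z v)
        (2 * ((deriv h (z + ↑t * v) * v).re ^ 2 + (deriv h (z + ↑t * v) * v).im ^ 2
          + (h (z + ↑t * v)).re * (deriv (deriv h) (z + ↑t * v) * v * v).re
          + (h (z + ↑t * v)).im * (deriv (deriv h) (z + ↑t * v) * v * v).im)) t := by
      have H := (((hasDerivAt_re' hg).mul (hasDerivAt_re' hGv)).add
        ((hasDerivAt_im' hg).mul (hasDerivAt_im' hGv))).const_mul 2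
      exact H.congr_deriv (by ring)
    have := hN.div (hA t ht) (ne_of_gt (hc _ ht))
    exact this

private lemma lap_dir {f : ℂ → ℂ} {U : Set ℂ} (hU : IsOpen U)
    (hf : DifferentiableOn ℂ f U) (hf2 : DifferentiableOn ℂ (deriv f) U)
    (hf3 : DifferentiableOn ℂ (deriv (deriv f)) U)
    (hf' : ∀ w ∈ U, deriv f w ≠ 0) {z : ℂ} (hz : z ∈ U)
    (v : ℂ) (hv : ‖v‖ = 1) :
    deriv (deriv (fun t : ℝ => Real.log (2 * Complex.normSq (deriv f (z + ↑t * v))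
        / (1 + Complex.normSq (f (z + ↑t * v))) ^ 2))) 0
      = Eof (deriv f) 0 z v 0 - 2 * Eof f 1 z v 0 := by
  obtain ⟨ε, hε, hball⟩ := Metric.isOpen_iff.1 hU z hz
  have mem : ∀ t ∈ Ioo (-ε) ε, z + ↑t * v ∈ U := by
    intro t ht
    apply hball
    simp only [Metric.mem_ball, Complex.dist_eq, add_sub_cancel_left]
    rw [norm_mul, hv, Complex.norm_real, Real.norm_eq_abs, mul_one]
    exact abs_lt.2 ⟨ht.1, ht.2⟩
  have hc1 : ∀ w ∈ U, 0 < (0:ℝ) + Complex.normSq (deriv f w) := by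
    intro w hw
    simpa using Complex.normSq_pos.2 (hf' w hw)
  have hc2 : ∀ w ∈ U, 0 < (1:ℝ) + Complex.normSq (f w) := by
    intro w hw
    have := Complex.normSq_nonneg (f w); linarith
  have K1 := second_deriv_along hU hf2 hf3 hc1 z v
  have K2 := second_deriv_along hU hf hf2 hc2 z v
  -- pointwise equality of the log expression with the split form
  have heq : ∀ t ∈ Ioo (-ε) ε,
      Real.log (2 * Complex.normSq (deriv f (z + ↑t * v))
          / (1 + Complex.normSq (f (z + ↑t * v))) ^ 2)
        = Real.log 2 + (Real.log ((0:ℝ) + Complex.normSq (deriv f (z + ↑t * v)))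
            - 2 * Real.log ((1:ℝ) + Complex.normSq (f (z + ↑t * v)))) := by
    intro t ht
    have h1 := hc1 _ (mem t ht)
    have h2 := hc2 _ (mem t ht)
    have h1' : 0 < Complex.normSq (deriv f (z + ↑t * v)) := by linarith
    rw [Real.log_div (mul_ne_zero two_ne_zero (ne_of_gt h1')) (by positivity),
      Real.log_mul two_ne_zero (ne_of_gt h1'), Real.log_pow, zero_add]
    push_cast
    ring
  -- derivative on the interval
  have hder : ∀ t ∈ Ioo (-ε) ε,
      HasDerivAt (fun s : ℝ => Real.log (2 * Complex.normSq (deriv f (z + ↑s * v))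
          / (1 + Complex.normSq (f (z + ↑s * v))) ^ 2))
        (Dof (deriv f) 0 z v t - 2 * Dof f 1 z v t) t := by
    intro t ht
    have h1 := K1.1 t (mem t ht)
    have h2 := K2.1 t (mem t ht)
    have hcomb := ((h1.sub (h2.const_mul 2)).const_add (Real.log 2))
    apply hcomb.congr_of_eventuallyEq
    filter_upwards [isOpen_Ioo.mem_nhds ht] with s hs
    exact heq s hs
  have h0 : (0:ℝ) ∈ Ioo (-ε) ε := ⟨by linarith, hε⟩
  have hD : deriv (fun t : ℝ => Real.log (2 * Complex.normSq (deriv f (z + ↑t * v))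
        / (1 + Complex.normSq (f (z + ↑t * v))) ^ 2))
      =ᶠ[nhds 0] (fun t => Dof (deriv f) 0 z v t - 2 * Dof f 1 z v t) := by
    filter_upwards [isOpen_Ioo.mem_nhds h0] with t ht
    exact (hder t ht).deriv
  rw [hD.deriv_eq]
  exact (((K1.2 0 (mem 0 h0)).sub ((K2.2 0 (mem 0 h0)).const_mul 2))).deriv

private lemma iteratedDeriv_two' (g : ℝ → ℝ) : iteratedDeriv 2 g 0 = deriv (deriv g) 0 := by
  rw [show (2:ℕ) = 1 + 1 from rfl, iteratedDeriv_succ, iteratedDeriv_succ, iteratedDeriv_zero]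

/-- The Laplacian `∂²/∂x² + ∂²/∂y²` of a function on `ℂ ≅ ℝ²`. -/
noncomputable def lap (u : ℂ → ℝ) (z : ℂ) : ℝ :=
  iteratedDeriv 2 (fun x : ℝ => u (z + x)) 0 +
  iteratedDeriv 2 (fun y : ℝ => u (z + y * Complex.I)) 0

theorem liouville_equation_of_holomorphic
    (U : Set ℂ) (hU : IsOpen U) (f : ℂ → ℂ)
    (hf : DifferentiableOn ℂ f U)
    (hf' : ∀ z ∈ U, deriv f z ≠ 0) :
    ContDiffOn ℝ (⊤ : ℕ∞)
        (fun z => Real.log (2 * ‖deriv f z‖ ^ 2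
          / (1 + ‖f z‖ ^ 2) ^ 2)) U ∧
      ∀ z ∈ U,
        -lap (fun w => Real.log (2 * ‖deriv f w‖ ^ 2
            / (1 + ‖f w‖ ^ 2) ^ 2)) z
          = 4 * Real.exp (Real.log (2 * ‖deriv f z‖ ^ 2
              / (1 + ‖f z‖ ^ 2) ^ 2)) := by
  have an : AnalyticOnNhd ℂ f U := hf.analyticOnNhd hU
  have hf2 : DifferentiableOn ℂ (deriv f) U := an.deriv.differentiableOn
  have hf3 : DifferentiableOn ℂ (deriv (deriv f)) U := an.deriv.deriv.differentiableOn
  simp only [Complex.sq_norm]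
  constructor
  · intro z hz
    apply ContDiffAt.contDiffWithinAt
    have hfa : ContDiffAt ℝ (⊤ : ℕ∞) f z := ((an z hz).contDiffAt).restrict_scalars ℝ
    have hf2a : ContDiffAt ℝ (⊤ : ℕ∞) (deriv f) z := ((an.deriv z hz).contDiffAt).restrict_scalars ℝ
    have hna : ContDiff ℝ (⊤ : ℕ∞) Complex.normSq := by
      have : ContDiff ℝ (⊤ : ℕ∞) (fun w : ℂ => Complex.reCLM w * Complex.reCLM w
          + Complex.imCLM w * Complex.imCLM w) :=
        (Complex.reCLM.contDiff.mul Complex.reCLM.contDiff).add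
          (Complex.imCLM.contDiff.mul Complex.imCLM.contDiff)
      exact this
    have c1 : ContDiffAt ℝ (⊤ : ℕ∞) (fun w => Complex.normSq (deriv f w)) z :=
      hna.contDiffAt.comp z hf2a
    have c2 : ContDiffAt ℝ (⊤ : ℕ∞) (fun w => Complex.normSq (f w)) z :=
      hna.contDiffAt.comp z hfa
    have hden : ((1:ℝ) + Complex.normSq (f z)) ^ 2 ≠ 0 := by
      have := Complex.normSq_nonneg (f z); positivity
    have hnum : 2 * Complex.normSq (deriv f z) ≠ 0 :=
      mul_ne_zero two_ne_zero (ne_of_gt (Complex.normSq_pos.2 (hf' z hz)))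
    have q : ContDiffAt ℝ (⊤ : ℕ∞) (fun w => 2 * Complex.normSq (deriv f w)
        / (1 + Complex.normSq (f w)) ^ 2) z :=
      ((contDiffAt_const.mul c1).div ((contDiffAt_const.add c2).pow 2) hden)
    exact q.log (div_ne_zero hnum hden)
  · intro z hz
    have hb : 0 < Complex.normSq (deriv f z) := Complex.normSq_pos.2 (hf' z hz)
    have hXpos : 0 < 2 * Complex.normSq (deriv f z) / (1 + Complex.normSq (f z)) ^ 2 := by
      have := Complex.normSq_nonneg (f z); positivity
    have h1 := lap_dir hU hf hf2 hf3 hf' hz 1 (by simp)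
    have hI := lap_dir hU hf hf2 hf3 hf' hz Complex.I (by simp)
    simp only [mul_one] at h1
    rw [lap, iteratedDeriv_two', iteratedDeriv_two', Real.exp_log hXpos]
    rw [show (fun x : ℝ => Real.log (2 * Complex.normSq (deriv f (z + ↑x))
        / (1 + Complex.normSq (f (z + ↑x))) ^ 2))
      = (fun x : ℝ => Real.log (2 * Complex.normSq (deriv f (z + ↑x))
        / (1 + Complex.normSq (f (z + ↑x))) ^ 2)) from rfl]
    rw [h1, hI]
    -- pure algebra
    have hA1 : ((0:ℝ) + Complex.normSq (deriv f z)) ≠ 0 := by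
      rw [zero_add]; exact ne_of_gt hb
    have hA2 : ((1:ℝ) + Complex.normSq (f z)) ≠ 0 := by
      have := Complex.normSq_nonneg (f z); linarith
    simp only [Eof, Nof, Aof, Complex.ofReal_zero, zero_mul, add_zero, mul_one,
      Complex.mul_re, Complex.mul_im, Complex.I_re, Complex.I_im, Complex.one_re,
      Complex.one_im, mul_zero, zero_add, sub_zero, zero_sub, neg_neg, one_mul,
      Complex.normSq_apply]
    rw [Complex.normSq_apply] at hA1 hA2 hb
    field_simp
    ring
end

section
/- Local Plücker formula for n = 1: if F₀ = (f₀, f₁) with f₀, f₁ holomorphic, and F₁ = f₀f₁' − f₀'f₁, then on the set where F₀ ≠ 0, Δ log|F₀|² = 4|F₁|²/|F₀|⁴, where |F₀|² = |f₀|² + |f₁|². -/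
open Complex ComplexConjugate Filter Topology RealInnerProductSpace

theorem iteratedDeriv_two_log_eq {N N' : ℝ → ℝ} {N'' t₀ : ℝ}
    (hN : ∀ᶠ t in 𝓝 t₀, HasDerivAt N (N' t) t) (hN' : HasDerivAt N' N'' t₀) (h₀ : N t₀ ≠ 0) :
    iteratedDeriv 2 (fun t => Real.log (N t)) t₀ = (N'' * N t₀ - N' t₀ ^ 2) / N t₀ ^ 2 := by
  have hne : ∀ᶠ t in 𝓝 t₀, N t ≠ 0 := hN.self_of_nhds.continuousAt.eventually_ne h₀
  have hlog : deriv (fun t => Real.log (N t)) =ᶠ[𝓝 t₀] fun t => N' t / N t := by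
    filter_upwards [hN, hne] with t hd ht using (hd.log ht).deriv
  rw [iteratedDeriv_succ, iteratedDeriv_one, hlog.deriv_eq,
    (hN'.fun_div hN.self_of_nhds h₀).deriv]
  ring

theorem HasDerivAt.comp_line {E : Type*} [NormedAddCommGroup E] [NormedSpace ℂ E]
    {f : ℂ → E} {f' : E} {z v : ℂ} {t : ℝ} (hf : HasDerivAt f f' (z + t * v)) :
    HasDerivAt (fun s : ℝ => f (z + s * v)) (v • f') t := by
  have hline : HasDerivAt (fun s : ℝ => z + s * v) v t := by
    simpa using ((ofRealCLM.hasDerivAt (x := t)).mul_const v).const_add z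
  exact hf.scomp t hline

theorem iteratedDeriv_two_log_sum_sq_norm_comp_line {ι : Type*} [Fintype ι] {f : ι → ℂ → ℂ}
    {z : ℂ} (hf : ∀ i, AnalyticAt ℂ (f i) z) (hN : ∑ i, ‖f i z‖ ^ 2 ≠ 0) (v : ℂ) :
    iteratedDeriv 2 (fun t : ℝ => Real.log (∑ i, ‖f i (z + t * v)‖ ^ 2)) 0 =
      ((∑ i, 2 * (⟪f i z, v * (v * deriv (deriv (f i)) z)⟫
            + ⟪v * deriv (f i) z, v * deriv (f i) z⟫)) * ∑ i, ‖f i z‖ ^ 2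
          - (∑ i, 2 * ⟪f i z, v * deriv (f i) z⟫) ^ 2)
        / (∑ i, ‖f i z‖ ^ 2) ^ 2 := by
  have hγ : Tendsto (fun t : ℝ => z + t * v) (𝓝 0) (𝓝 z) :=
    (continuous_const.add (continuous_ofReal.mul continuous_const)).tendsto' 0 z (by simp)
  have hev : ∀ᶠ t : ℝ in 𝓝 0, ∀ i, HasDerivAt (f i) (deriv (f i) (z + t * v)) (z + t * v) :=
    hγ.eventually <| eventually_all.2 fun i =>
      (hf i).eventually_analyticAt.mono fun w hw => hw.differentiableAt.hasDerivAt
  have hderiv₂ : ∀ i, HasDerivAt (deriv (f i)) (deriv (deriv (f i)) (z + (0 : ℝ) * v))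
      (z + (0 : ℝ) * v) := by
    intro i
    simpa using (hf i).deriv.differentiableAt.hasDerivAt
  have h := iteratedDeriv_two_log_eq
    (N' := fun t => ∑ i, 2 * ⟪f i (z + t * v), v * deriv (f i) (z + t * v)⟫)
    (hev.mono fun t ht => HasDerivAt.fun_sum fun i _ => (ht i).comp_line.norm_sq)
    (HasDerivAt.fun_sum fun i _ =>
      ((hev.self_of_nhds i).comp_line.inner ℝ ((hderiv₂ i).comp_line.const_mul v)).const_mul 2)
    (by simpa using hN)
  simpa only [ofReal_zero, zero_mul, add_zero, smul_eq_mul] using h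

theorem lap_log_sum_sq_norm {ι : Type*} [Fintype ι] {f : ι → ℂ → ℂ} {z : ℂ}
    (hf : ∀ i, AnalyticAt ℂ (f i) z) (hN : ∑ i, ‖f i z‖ ^ 2 ≠ 0) :
    lap (fun w => Real.log (∑ i, ‖f i w‖ ^ 2)) z =
      4 * ((∑ i, ‖f i z‖ ^ 2) * (∑ i, ‖deriv (f i) z‖ ^ 2)
          - ‖∑ i, conj (f i z) * deriv (f i) z‖ ^ 2) / (∑ i, ‖f i z‖ ^ 2) ^ 2 := by
  set S := ∑ i, conj (f i z) * deriv (f i) z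
  have hlap : lap (fun w => Real.log (∑ i, ‖f i w‖ ^ 2)) z =
      iteratedDeriv 2 (fun t : ℝ => Real.log (∑ i, ‖f i (z + t * 1)‖ ^ 2)) 0 +
        iteratedDeriv 2 (fun t : ℝ => Real.log (∑ i, ‖f i (z + t * I)‖ ^ 2)) 0 := by
    simp only [lap, mul_one]
  have hsecond :
      ∑ i, 2 * (⟪f i z, 1 * (1 * deriv (deriv (f i)) z)⟫ + ⟪1 * deriv (f i) z, 1 * deriv (f i) z⟫)
        + ∑ i, 2 * (⟪f i z, I * (I * deriv (deriv (f i)) z)⟫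
          + ⟪I * deriv (f i) z, I * deriv (f i) z⟫)
      = 4 * ∑ i, ‖deriv (f i) z‖ ^ 2 := by
    rw [← Finset.sum_add_distrib, Finset.mul_sum]
    refine Finset.sum_congr rfl fun i _ => ?_
    simp only [one_mul, ← mul_assoc, I_mul_I, neg_one_mul, inner_neg_right,
      real_inner_self_eq_norm_sq, norm_mul, norm_I]
    ring
  have hre : ∑ i, ⟪f i z, 1 * deriv (f i) z⟫ = S.re := by
    simp [S, Complex.inner, re_sum, mul_comm]
  have him : ∑ i, ⟪f i z, I * deriv (f i) z⟫ = -S.im := by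
    simp only [S, Complex.inner, im_sum, ← Finset.sum_neg_distrib]
    refine Finset.sum_congr rfl fun i _ => ?_
    simp only [mul_re, mul_im, I_re, I_im, conj_re, conj_im]
    ring
  have hfirst :
      (∑ i, 2 * ⟪f i z, 1 * deriv (f i) z⟫) ^ 2 + (∑ i, 2 * ⟪f i z, I * deriv (f i) z⟫) ^ 2
        = 4 * ‖S‖ ^ 2 := by
    rw [← Finset.mul_sum, ← Finset.mul_sum, hre, him, Complex.sq_norm, normSq_apply]
    ring
  rw [hlap, iteratedDeriv_two_log_sum_sq_norm_comp_line hf hN,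
    iteratedDeriv_two_log_sum_sq_norm_comp_line hf hN, ← add_div]
  congr 1
  linear_combination (∑ i, ‖f i z‖ ^ 2) * hsecond - hfirst

theorem Complex.sq_norm_mul_sub_mul (a b c d : ℂ) :
    ‖a * d - c * b‖ ^ 2
      = (‖a‖ ^ 2 + ‖b‖ ^ 2) * (‖c‖ ^ 2 + ‖d‖ ^ 2) - ‖conj a * c + conj b * d‖ ^ 2 := by
  simp only [Complex.sq_norm, normSq_apply, add_re, add_im, sub_re, sub_im, mul_re, mul_im,
    conj_re, conj_im]
  ring

theorem local_plucker_formula_n_one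
    (U : Set ℂ) (hU : IsOpen U) (f₀ f₁ : ℂ → ℂ)
    (hf₀ : DifferentiableOn ℂ f₀ U) (hf₁ : DifferentiableOn ℂ f₁ U) :
    ∀ z ∈ U, ‖f₀ z‖ ^ 2 + ‖f₁ z‖ ^ 2 ≠ 0 →
      lap (fun w => Real.log (‖f₀ w‖ ^ 2 + ‖f₁ w‖ ^ 2)) z
        = 4 * ‖f₀ z * deriv f₁ z - deriv f₀ z * f₁ z‖ ^ 2
            / (‖f₀ z‖ ^ 2 + ‖f₁ z‖ ^ 2) ^ 2 := by
  intro z hz hne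
  have hf : ∀ i, AnalyticAt ℂ (![f₀, f₁] i) z := Fin.forall_fin_two.2
    ⟨hf₀.analyticAt (hU.mem_nhds hz), hf₁.analyticAt (hU.mem_nhds hz)⟩
  have h := lap_log_sum_sq_norm hf (by simpa using hne)
  simp only [Fin.sum_univ_two, Matrix.cons_val_zero, Matrix.cons_val_one] at h
  rw [h, Complex.sq_norm_mul_sub_mul]
end

section
/- If (f₀,…,f_n) is replaced by (h f₀, …, h f_n) for a nonvanishing entire function h, then the k-th derived curve transforms as F_k ↦ h^{k+1} F_k for every 0 ≤ k ≤ n. -/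
/-!
By the Leibniz rule, the `i`-th derivative of `h * g` is a combination of `g, g', …, g^{(i)}`
with coefficients `(i choose l) h^{(i - l)}`. Hence the matrix of derivatives of the `h * f_j`
is a lower triangular matrix with diagonal `h` times the matrix of derivatives of the `f_j`, and
taking determinants gives the factor `h^{k+1}`.
-/

open Finset Matrix

namespace Wronskian

variable {𝕜 : Type*} [NontriviallyNormedField 𝕜] {𝔸 : Type*} [NormedCommRing 𝔸]
  [NormedAlgebra 𝕜 𝔸] {ι : Type*}

noncomputable def derivMatrix (m : ℕ) (g : ι → 𝕜 → 𝔸) (z : 𝕜) : Matrix (Fin (m + 1)) ι 𝔸 :=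
  of fun i j => iteratedDeriv (i : ℕ) (g j) z

noncomputable def leibnizMatrix (m : ℕ) (h : 𝕜 → 𝔸) (z : 𝕜) :
    Matrix (Fin (m + 1)) (Fin (m + 1)) 𝔸 :=
  of fun i l => if l ≤ i then ((i : ℕ).choose l : 𝔸) * iteratedDeriv (i - l : ℕ) h z else 0

theorem leibnizMatrix_isLowerTriangular (m : ℕ) (h : 𝕜 → 𝔸) (z : 𝕜) :
    (leibnizMatrix m h z).IsLowerTriangular := fun i l hil => by
  simp [leibnizMatrix, not_le.mpr (show i < l from hil)]

theorem det_leibnizMatrix (m : ℕ) (h : 𝕜 → 𝔸) (z : 𝕜) :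
    (leibnizMatrix m h z).det = h z ^ (m + 1) := by
  rw [det_of_isLowerTriangular _ (leibnizMatrix_isLowerTriangular m h z)]
  simp [leibnizMatrix]

theorem derivMatrix_mul_left {m : ℕ} {h : 𝕜 → 𝔸} {g : ι → 𝕜 → 𝔸} {z : 𝕜}
    (hh : ContDiffAt 𝕜 m h z) (hg : ∀ j, ContDiffAt 𝕜 m (g j) z) :
    derivMatrix m (fun j t => h t * g j t) z = leibnizMatrix m h z * derivMatrix m g z := by
  ext i j
  have hi : ((i : ℕ) : WithTop ℕ∞) ≤ m := by exact_mod_cast Nat.lt_succ_iff.mp i.isLt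
  have hrange : (range (m + 1)).filter (· ≤ (i : ℕ)) = range (i + 1) := by
    ext l; simp only [mem_filter, mem_range]; omega
  simp_rw [derivMatrix, of_apply, mul_comm (h _)]
  rw [iteratedDeriv_fun_mul ((hg j).of_le hi) (hh.of_le hi),
    ← hrange, sum_filter, mul_apply,
    ← Fin.sum_univ_eq_sum_range (fun l => if l ≤ (i : ℕ) then _ else 0)]
  refine sum_congr rfl fun l _ => ?_
  by_cases hli : l ≤ i
  · simp only [leibnizMatrix, of_apply, if_pos hli, if_pos (Fin.le_def.mp hli)]
    ring
  · simp [leibnizMatrix, hli]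

theorem det_derivMatrix_mul_left {m : ℕ} {h : 𝕜 → 𝔸} {g : Fin (m + 1) → 𝕜 → 𝔸} {z : 𝕜}
    (hh : ContDiffAt 𝕜 m h z) (hg : ∀ j, ContDiffAt 𝕜 m (g j) z) :
    (derivMatrix m (fun j t => h t * g j t) z).det = h z ^ (m + 1) * (derivMatrix m g z).det := by
  rw [derivMatrix_mul_left hh hg, det_mul, det_leibnizMatrix]

end Wronskian

open Wronskian in
theorem derived_curve_transforms_under_common_factor_general
    (n : ℕ) (f : Fin (n + 1) → ℂ → ℂ) (h : ℂ → ℂ)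
    (hf : ∀ i, Differentiable ℂ (f i))
    (hh : Differentiable ℂ h) :
    ∀ k ≤ n, ∀ (s : Finset (Fin (n + 1))) (hs : s.card = k + 1), ∀ z : ℂ,
      Matrix.det (Matrix.of fun i j : Fin (k + 1) =>
          iteratedDeriv (i : ℕ) (fun t => h t * f (s.orderIsoOfFin hs j) t) z)
        = h z ^ (k + 1) * Matrix.det (Matrix.of fun i j : Fin (k + 1) =>
            iteratedDeriv (i : ℕ) (f (s.orderIsoOfFin hs j)) z) := by
  intro k _ s hs z
  exact det_derivMatrix_mul_left hh.contDiff.contDiffAt fun j => (hf _).contDiff.contDiffAt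

theorem derived_curve_transforms_under_common_factor
    (n : ℕ) (f : Fin (n + 1) → ℂ → ℂ) (h : ℂ → ℂ)
    (hf : ∀ i, Differentiable ℂ (f i))
    (hh : Differentiable ℂ h) (hne : ∀ z : ℂ, h z ≠ 0) :
    ∀ k ≤ n, ∀ (s : Finset (Fin (n + 1))) (hs : s.card = k + 1), ∀ z : ℂ,
      Matrix.det (Matrix.of fun i j : Fin (k + 1) =>
          iteratedDeriv (i : ℕ) (fun t => h t * f (s.orderIsoOfFin hs j) t) z)
        = h z ^ (k + 1) * Matrix.det (Matrix.of fun i j : Fin (k + 1) =>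
            iteratedDeriv (i : ℕ) (f (s.orderIsoOfFin hs j)) z) :=
  derived_curve_transforms_under_common_factor_general n f h hf hh
end
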